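/- Let G: ℝ^m → ℝ be differentiable and H(φ, c_φ)-convex, where φ is a norm power function of order r_φ > 1 and c_φ ≥ 0. Suppose G attains its global minimum G_* = min_μ G(μ) at a point μ_* ∈ ℝ^m. Then for every μ ∈ ℝ^m: φ(μ − μ_*) − c_φ ≤ G(μ) − G_* ≤ φ*(∇G(μ)) + c_φ, where φ* is the Legendre–Fenchel conjugate of φ. -/
import Mathlib

open scoped InnerProductSpace

/-- The Legendre–Fenchel conjugate of a function on `ℝ^m`. -/
noncomputable def fenchelConj {m : ℕ} (φ : EuclideanSpace ℝ (Fin m) → ℝ)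
    (ν : EuclideanSpace ℝ (Fin m)) : ℝ :=
  ⨆ μ : EuclideanSpace ℝ (Fin m), (⟪ν, μ⟫_ℝ - φ μ)

/-- `N` is a norm on `ℝ^m`. -/
def IsNorm {m : ℕ} (N : EuclideanSpace ℝ (Fin m) → ℝ) : Prop :=
  N 0 = 0 ∧ (∀ x, x ≠ 0 → 0 < N x) ∧
    (∀ (a : ℝ) (x), N (a • x) = |a| * N x) ∧
    (∀ x y, N (x + y) ≤ N x + N y)

section aux

variable {m : ℕ} {N : EuclideanSpace ℝ (Fin m) → ℝ}

lemma isnorm_nonneg (hN : IsNorm N) (x : EuclideanSpace ℝ (Fin m)) : 0 ≤ N x := by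
  by_cases h : x = 0
  · simp [h, hN.1]
  · exact (hN.2.1 x h).le

lemma isnorm_le_const_mul_norm (hN : IsNorm N) :
    ∃ C : ℝ, ∀ x : EuclideanSpace ℝ (Fin m), N x ≤ C * ‖x‖ := by
  refine ⟨∑ i, N (EuclideanSpace.single i 1), fun x => ?_⟩
  have hx : x = ∑ i, x i • EuclideanSpace.single i (1:ℝ) := by
    have := (EuclideanSpace.basisFun (Fin m) ℝ).sum_repr x
    simp only [EuclideanSpace.basisFun_apply, EuclideanSpace.basisFun_repr] at this
    exact this.symm
  have habs : ∀ i, |x i| ≤ ‖x‖ := by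
    intro i
    rw [EuclideanSpace.norm_eq]
    calc |x i| = Real.sqrt (|x i|^2) := by rw [Real.sqrt_sq_eq_abs, abs_abs]
    _ ≤ _ := by
        apply Real.sqrt_le_sqrt
        have : |x i|^2 ≤ ∑ j, ‖x j‖^2 :=
          Finset.single_le_sum (f := fun j => ‖x j‖^2) (fun j _ => by positivity)
            (Finset.mem_univ i)
        simpa using this
  calc N x = N (∑ i, x i • EuclideanSpace.single i (1:ℝ)) := by rw [← hx]
  _ ≤ ∑ i, N (x i • EuclideanSpace.single i (1:ℝ)) := by
      classical
      induction (Finset.univ : Finset (Fin m)) using Finset.cons_induction with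
      | empty => simp [hN.1]
      | cons a s ha ih =>
          rw [Finset.sum_cons, Finset.sum_cons]
          exact (hN.2.2.2 _ _).trans (by linarith)
  _ = ∑ i, |x i| * N (EuclideanSpace.single i 1) := by
      simp [hN.2.2.1]
  _ ≤ ∑ i, ‖x‖ * N (EuclideanSpace.single i 1) := by
      apply Finset.sum_le_sum
      intro i _
      exact mul_le_mul_of_nonneg_right (habs i) (isnorm_nonneg hN _)
  _ = (∑ i, N (EuclideanSpace.single i 1)) * ‖x‖ := by rw [← Finset.mul_sum, mul_comm]

lemma isnorm_continuous (hN : IsNorm N) : Continuous N := by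
  obtain ⟨C₀, hC₀⟩ := isnorm_le_const_mul_norm hN
  set C : ℝ := max C₀ 0 with hCdef
  have hC : ∀ x : EuclideanSpace ℝ (Fin m), N x ≤ C * ‖x‖ := fun x =>
    (hC₀ x).trans (mul_le_mul_of_nonneg_right (le_max_left _ _) (norm_nonneg x))
  have hC0 : 0 ≤ C := le_max_right _ _
  have hlip : LipschitzWith (Real.toNNReal C) N := by
    apply LipschitzWith.of_dist_le_mul
    intro x y
    have h1 : N x ≤ N y + N (x - y) := by
      have := hN.2.2.2 y (x - y)
      simpa using this
    have h2 : N y ≤ N x + N (y - x) := by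
      have := hN.2.2.2 x (y - x)
      simpa using this
    have hnegxy : N (y - x) = N (x - y) := by
      have := hN.2.2.1 (-1) (x - y)
      simpa [neg_sub] using this
    have hd : dist (N x) (N y) ≤ N (x - y) := by
      rw [Real.dist_eq, abs_sub_le_iff]
      constructor <;> linarith
    calc dist (N x) (N y) ≤ N (x - y) := hd
    _ ≤ C * ‖x - y‖ := hC _
    _ = (Real.toNNReal C) * dist x y := by
        rw [Real.coe_toNNReal C hC0, dist_eq_norm]
  exact hlip.continuous

lemma isnorm_ge_const_mul_norm (hN : IsNorm N) :
    ∃ c : ℝ, 0 < c ∧ ∀ x : EuclideanSpace ℝ (Fin m), c * ‖x‖ ≤ N x := by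
  by_cases hm : ∀ x : EuclideanSpace ℝ (Fin m), x = 0
  · exact ⟨1, one_pos, fun x => by simp [hm x, hN.1]⟩
  push_neg at hm
  obtain ⟨x₀, hx₀⟩ := hm
  have hsne : (Metric.sphere (0 : EuclideanSpace ℝ (Fin m)) 1).Nonempty := by
    refine ⟨‖x₀‖⁻¹ • x₀, ?_⟩
    simp [norm_smul, abs_of_nonneg (inv_nonneg.2 (norm_nonneg x₀)),
      inv_mul_cancel₀ (norm_ne_zero_iff.2 hx₀)]
  obtain ⟨z, hz, hzmin⟩ := (isCompact_sphere (0 : EuclideanSpace ℝ (Fin m)) 1).exists_isMinOn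
    hsne ((isnorm_continuous hN).continuousOn)
  have hz1 : ‖z‖ = 1 := by simpa using hz
  have hzne : z ≠ 0 := by
    intro h; rw [h] at hz1; simp at hz1
  refine ⟨N z, hN.2.1 z hzne, fun x => ?_⟩
  by_cases hx : x = 0
  · simp [hx, hN.1]
  · have hu : (‖x‖⁻¹ • x) ∈ Metric.sphere (0 : EuclideanSpace ℝ (Fin m)) 1 := by
      simp [norm_smul, abs_of_nonneg (inv_nonneg.2 (norm_nonneg x)),
        inv_mul_cancel₀ (norm_ne_zero_iff.2 hx)]
    have hle' : N z ≤ N (‖x‖⁻¹ • x) := hzmin hu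
    have hNu : N (‖x‖⁻¹ • x) = ‖x‖⁻¹ * N x := by
      rw [hN.2.2.1]
      congr 1
      exact abs_of_nonneg (inv_nonneg.2 (norm_nonneg x))
    rw [hNu] at hle'
    have hxpos : (0:ℝ) < ‖x‖ := norm_pos_iff.2 hx
    rw [mul_comm]
    calc ‖x‖ * N z ≤ ‖x‖ * (‖x‖⁻¹ * N x) := by
          exact mul_le_mul_of_nonneg_left hle' hxpos.le
    _ = N x := by field_simp

end aux

theorem stmt6 {m : ℕ} (N : EuclideanSpace ℝ (Fin m) → ℝ) (hN : IsNorm N)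
    (rφ : ℝ) (hr : 1 < rφ)
    (φ : EuclideanSpace ℝ (Fin m) → ℝ) (hφ : ∀ μ, φ μ = N μ ^ rφ)
    (cφ : ℝ) (hcφ : 0 ≤ cφ)
    (G : EuclideanSpace ℝ (Fin m) → ℝ) (hG : Differentiable ℝ G)
    (hconvex : ∀ μ ν : EuclideanSpace ℝ (Fin m),
      φ (μ - ν) - cφ ≤ G μ - G ν - ⟪gradient G ν, μ - ν⟫_ℝ)
    (μstar : EuclideanSpace ℝ (Fin m)) (hmin : ∀ μ, G μstar ≤ G μ) :
    ∀ μ : EuclideanSpace ℝ (Fin m),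
      φ (μ - μstar) - cφ ≤ G μ - G μstar ∧
      G μ - G μstar ≤ fenchelConj φ (gradient G μ) + cφ := by
  -- gradient at the minimizer vanishes
  have hgradstar : gradient G μstar = 0 := by
    have hloc : IsLocalMin G μstar := (isMinOn_univ_iff.2 hmin).isLocalMin (by simp)
    have hf : fderiv ℝ G μstar = 0 := hloc.fderiv_eq_zero
    rw [gradient, hf, map_zero]
  -- bounded-above of the Fenchel conjugate supremand
  obtain ⟨c, hc, hcle⟩ := isnorm_ge_const_mul_norm hN
  have hbdd : ∀ ν : EuclideanSpace ℝ (Fin m),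
      BddAbove (Set.range fun μ : EuclideanSpace ℝ (Fin m) => ⟪ν, μ⟫_ℝ - φ μ) := by
    intro ν
    set a : ℝ := ‖ν‖ with ha
    set b : ℝ := c ^ rφ with hb
    have hb0 : 0 < b := Real.rpow_pos_of_pos hc _
    set T : ℝ := max 1 ((a / b) ^ (1 / (rφ - 1))) with hT
    refine ⟨a * T, ?_⟩
    rintro _ ⟨μ, rfl⟩
    show ⟪ν, μ⟫_ℝ - φ μ ≤ a * T
    have ha0 : 0 ≤ a := norm_nonneg ν
    have hT1 : (1:ℝ) ≤ T := le_max_left _ _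
    have hinner : ⟪ν, μ⟫_ℝ ≤ a * ‖μ‖ := real_inner_le_norm ν μ
    have hφμ : b * ‖μ‖ ^ rφ ≤ φ μ := by
      rw [hφ]
      calc b * ‖μ‖ ^ rφ = (c * ‖μ‖) ^ rφ := by
            rw [Real.mul_rpow hc.le (norm_nonneg μ)]
      _ ≤ N μ ^ rφ := by
            apply Real.rpow_le_rpow (by positivity) (hcle μ) (by linarith)
    set t : ℝ := ‖μ‖ with ht
    have ht0 : 0 ≤ t := norm_nonneg μ
    have key : a * t - b * t ^ rφ ≤ a * T := by
      rcases le_or_gt t T with h | h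
      · have : 0 ≤ b * t ^ rφ := by positivity
        nlinarith [mul_le_mul_of_nonneg_left h ha0]
      · have htpos : 0 < t := lt_of_le_of_lt (by linarith) h
        have hab : a / b ≤ t ^ (rφ - 1) := by
          calc a / b = ((a / b) ^ (1 / (rφ - 1))) ^ (rφ - 1) := by
                rw [← Real.rpow_mul (by positivity : (0:ℝ) ≤ a / b),
                  one_div_mul_cancel (by linarith : rφ - 1 ≠ 0), Real.rpow_one]
          _ ≤ T ^ (rφ - 1) := by
                apply Real.rpow_le_rpow (Real.rpow_nonneg (by positivity) _)
                  (le_max_right _ _) (by linarith)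
          _ ≤ t ^ (rφ - 1) := Real.rpow_le_rpow (by linarith) h.le (by linarith)
        have htr : t ^ rφ = t ^ (rφ - 1) * t := by
          rw [← Real.rpow_add_one (ne_of_gt htpos)]
          ring_nf
        have : a * t ≤ b * t ^ rφ := by
          rw [htr, ← mul_assoc]
          apply mul_le_mul_of_nonneg_right _ htpos.le
          rw [div_le_iff₀ hb0] at hab
          linarith [hab]
        have h0 : 0 ≤ a * T := by positivity
        linarith
    linarith [hinner, hφμ, key]
  intro μ
  constructor
  · have h := hconvex μ μstar
    rw [hgradstar] at h
    simpa using h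
  · have h := hconvex μstar μ
    have hflip : φ (μstar - μ) = φ (μ - μstar) := by
      rw [hφ, hφ]
      have : N (μstar - μ) = N (μ - μstar) := by
        have := hN.2.2.1 (-1) (μ - μstar)
        simpa [neg_sub] using this
      rw [this]
    have hinner : ⟪gradient G μ, μstar - μ⟫_ℝ = - ⟪gradient G μ, μ - μstar⟫_ℝ := by
      rw [← inner_neg_right]
      congr 1
      abel
    rw [hflip, hinner] at h
    have hle : ⟪gradient G μ, μ - μstar⟫_ℝ - φ (μ - μstar) ≤ fenchelConj φ (gradient G μ) :=
      le_ciSup (hbdd (gradient G μ)) (μ - μstar)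
    linarith
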